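/- Let L be a bounded distributive lattice and f : L^n → L a polynomial function with at least two essential variables. Then the arity gap of f equals the arity gap of its restriction f|_{{0,1}^n} : {0,1}^n → L. -/
import Mathlib


inductive IsLatPoly {L : Type*} [DistribLattice L] [BoundedOrder L] {n : ℕ} :
    ((Fin n → L) → L) → Prop
  | proj (i : Fin n) : IsLatPoly (fun x => x i)
  | const (c : L) : IsLatPoly (fun _ => c)
  | inf {f g : (Fin n → L) → L} : IsLatPoly f → IsLatPoly g → IsLatPoly (fun x => f x ⊓ g x)
  | sup {f g : (Fin n → L) → L} : IsLatPoly f → IsLatPoly g → IsLatPoly (fun x => f x ⊔ g x)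

def EssentialAt {A B : Type*} {n : ℕ} (f : (Fin n → A) → B) (j : Fin n) : Prop :=
  ∃ (a : Fin n → A) (b : A), f (Function.update a j b) ≠ f a

noncomputable def essArity {A B : Type*} {n : ℕ} (f : (Fin n → A) → B) : ℕ :=
  Set.ncard {j | EssentialAt f j}

def idMinor {A B : Type*} {n : ℕ} (f : (Fin n → A) → B) (i j : Fin n) :
    (Fin n → A) → B :=
  fun x => f (Function.update x i (x j))

noncomputable def arityGap {A B : Type*} {n : ℕ} (f : (Fin n → A) → B) : ℕ :=
  sInf {d | ∃ i j, i ≠ j ∧ EssentialAt f i ∧ EssentialAt f j ∧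
    d = essArity f - essArity (idMinor f i j)}

def boolEmb {L : Type*} [DistribLattice L] [BoundedOrder L] : Bool → L :=
  fun b => if b then ⊤ else ⊥

section Aux

variable {L : Type*} [DistribLattice L] [BoundedOrder L] {n : ℕ}

lemma IsLatPoly.monotone {f : (Fin n → L) → L} (hf : IsLatPoly f) : Monotone f := by
  induction hf with
  | proj i => exact fun _ _ h => h i
  | const c => exact monotone_const
  | inf _ _ ihf ihg => exact fun x y h => inf_le_inf (ihf h) (ihg h)
  | sup _ _ ihf ihg => exact fun x y h => sup_le_sup (ihf h) (ihg h)

lemma boolEmb_le_or {a b : Fin n → Bool} :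
    (fun i => boolEmb (a i) : Fin n → L) ≤ fun i => boolEmb (a i || b i) := by
  intro i
  cases h : a i <;> simp [h, boolEmb]

lemma goodstein {f : (Fin n → L) → L} (hf : IsLatPoly f) (x : Fin n → L) :
    f x = Finset.univ.sup (fun a : Fin n → Bool =>
      f (fun i => boolEmb (a i)) ⊓ (Finset.univ.filter fun i => a i = true).inf x) := by
  induction hf with
  | proj k =>
    apply le_antisymm
    · have hmem : (fun i : Fin n => decide (i = k)) ∈ (Finset.univ : Finset (Fin n → Bool)) :=
        Finset.mem_univ _
      refine le_trans ?_ (Finset.le_sup hmem)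
      have h1 : (Finset.univ.filter fun i : Fin n => decide (i = k) = true) = {k} := by
        ext i; simp
      rw [h1]
      simp [boolEmb]
    · apply Finset.sup_le
      intro a _
      cases h : a k with
      | false => simp [h, boolEmb]
      | true =>
        refine le_trans inf_le_right ?_
        exact Finset.inf_le (by simp [h])
  | const c =>
    apply le_antisymm
    · have hmem : (fun _ : Fin n => false) ∈ (Finset.univ : Finset (Fin n → Bool)) :=
        Finset.mem_univ _
      refine le_trans ?_ (Finset.le_sup hmem)
      have h1 : (Finset.univ.filter fun i : Fin n => (false = true)) = (∅ : Finset (Fin n)) := by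
        simp
      rw [h1]
      simp
    · exact Finset.sup_le fun a _ => inf_le_left
  | inf hf hg ihf ihg =>
    rename_i f g
    beta_reduce
    rw [ihf, ihg, Finset.sup_inf_distrib_right]
    apply le_antisymm
    · apply Finset.sup_le
      intro a _
      rw [Finset.sup_inf_distrib_left]
      apply Finset.sup_le
      intro b _
      have hmem : (fun i => a i || b i) ∈ (Finset.univ : Finset (Fin n → Bool)) :=
        Finset.mem_univ _
      refine le_trans ?_ (Finset.le_sup hmem)
      have hset : (Finset.univ.filter fun i => (a i || b i) = true)
          = (Finset.univ.filter fun i => a i = true) ∪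
            (Finset.univ.filter fun i => b i = true) := by
        ext i; by_cases ha : a i <;> by_cases hb : b i <;> simp [ha, hb]
      rw [hset, Finset.inf_union]
      have hfa : f (fun i => boolEmb (a i)) ≤ f (fun i => boolEmb (a i || b i)) :=
        hf.monotone boolEmb_le_or
      have hgb : g (fun i => boolEmb (b i)) ≤ g (fun i => boolEmb (a i || b i)) := by
        refine hg.monotone ?_
        intro i; cases hb : b i <;> simp [hb, boolEmb]
      refine le_inf (le_inf ?_ ?_) ?_
      · exact le_trans inf_le_left (le_trans inf_le_left hfa)
      · exact le_trans inf_le_right (le_trans inf_le_left hgb)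
      · exact le_inf (le_trans inf_le_left inf_le_right) (le_trans inf_le_right inf_le_right)
    · apply Finset.sup_le
      intro a _
      refine le_trans ?_ (Finset.le_sup (Finset.mem_univ a))
      rw [Finset.sup_inf_distrib_left]
      refine le_trans ?_ (Finset.le_sup (Finset.mem_univ a))
      exact le_inf (le_inf (le_trans inf_le_left inf_le_left) inf_le_right)
        (le_inf (le_trans inf_le_left inf_le_right) inf_le_right)
  | sup hf hg ihf ihg =>
    beta_reduce
    rw [ihf, ihg, ← Finset.sup_sup]
    congr 1
    funext a
    exact (inf_sup_right _ _ _).symm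

lemma comp_boolEmb_update (a : Fin n → Bool) (j : Fin n) (b : Bool) :
    (fun i => boolEmb (Function.update a j b i) : Fin n → L)
      = Function.update (fun i => boolEmb (a i)) j (boolEmb b) := by
  funext k
  simp only [Function.update_apply]
  split <;> rfl

lemma inessential_of_bool {f : (Fin n → L) → L} (hf : IsLatPoly f) (j : Fin n)
    (h : ∀ (a : Fin n → Bool) (b : Bool),
      f (Function.update (fun i => boolEmb (a i)) j (boolEmb b)) = f (fun i => boolEmb (a i))) :
    ∀ (x : Fin n → L) (b : L), f (Function.update x j b) = f x := by
  have key : ∀ (x : Fin n → L) (b b' : L),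
      f (Function.update x j b) ≤ f (Function.update x j b') := by
    intro x b b'
    rw [goodstein hf (Function.update x j b), goodstein hf (Function.update x j b')]
    apply Finset.sup_le
    intro a _
    set a' := Function.update a j false with ha'
    refine le_trans ?_ (Finset.le_sup (Finset.mem_univ a'))
    have hc : f (fun i => boolEmb (a i)) = f (fun i => boolEmb (a' i)) := by
      rw [ha', comp_boolEmb_update, h]
    have hsub : (Finset.univ.filter fun i => a' i = true)
        ⊆ (Finset.univ.filter fun i => a i = true) := by
      intro i hi
      simp only [Finset.mem_filter, Finset.mem_univ, true_and] at hi ⊢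
      rcases eq_or_ne i j with rfl | hne
      · simp [ha', Function.update_self] at hi
      · rwa [ha', Function.update_of_ne hne] at hi
    have hinf : (Finset.univ.filter fun i => a' i = true).inf (Function.update x j b)
        = (Finset.univ.filter fun i => a' i = true).inf (Function.update x j b') := by
      apply Finset.inf_congr rfl
      intro i hi
      simp only [Finset.mem_filter, Finset.mem_univ, true_and] at hi
      have hne : i ≠ j := by
        rintro rfl
        simp [ha', Function.update_self] at hi
      rw [Function.update_of_ne hne, Function.update_of_ne hne]
    refine inf_le_inf (le_of_eq hc) ?_
    calc (Finset.univ.filter fun i => a i = true).inf (Function.update x j b)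
        ≤ (Finset.univ.filter fun i => a' i = true).inf (Function.update x j b) :=
          Finset.inf_mono hsub
      _ = _ := hinf
  intro x b
  have h1 : f (Function.update x j b) = f (Function.update x j (x j)) :=
    le_antisymm (key x b (x j)) (key x (x j) b)
  rwa [Function.update_eq_self] at h1

lemma essentialAt_iff_bool {f : (Fin n → L) → L} (hf : IsLatPoly f) (j : Fin n) :
    EssentialAt f j ↔
      EssentialAt (fun x : Fin n → Bool => f (fun i => boolEmb (x i))) j := by
  constructor
  · intro hE
    by_contra hg
    simp only [EssentialAt, not_exists, not_ne_iff] at hg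
    have h : ∀ (a : Fin n → Bool) (b : Bool),
        f (Function.update (fun i => boolEmb (a i)) j (boolEmb b)) = f (fun i => boolEmb (a i)) := by
      intro a b
      have := hg a b
      rwa [comp_boolEmb_update] at this
    obtain ⟨x, b, hxb⟩ := hE
    exact hxb (inessential_of_bool hf j h x b)
  · rintro ⟨a, b, hab⟩
    refine ⟨fun i => boolEmb (a i), boolEmb b, ?_⟩
    rwa [← comp_boolEmb_update]

lemma IsLatPoly.idMinor_poly {f : (Fin n → L) → L} (hf : IsLatPoly f) (i j : Fin n) :
    IsLatPoly (idMinor f i j) := by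
  induction hf with
  | proj k =>
    by_cases h : k = i
    · subst h
      have : idMinor (fun x : Fin n → L => x k) k j = fun x => x j := by
        funext x; simp [idMinor]
      rw [this]; exact IsLatPoly.proj j
    · have : idMinor (fun x : Fin n → L => x k) i j = fun x => x k := by
        funext x; simp [idMinor, Function.update_of_ne h]
      rw [this]; exact IsLatPoly.proj k
  | const c => exact IsLatPoly.const c
  | inf _ _ ih1 ih2 => exact IsLatPoly.inf ih1 ih2
  | sup _ _ ih1 ih2 => exact IsLatPoly.sup ih1 ih2

lemma restr_idMinor (f : (Fin n → L) → L) (i j : Fin n) :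
    (fun x : Fin n → Bool => idMinor f i j (fun k => boolEmb (x k)))
      = idMinor (fun x : Fin n → Bool => f (fun k => boolEmb (x k))) i j := by
  funext x
  simp only [idMinor]
  congr 1
  funext k
  simp only [Function.update_apply]
  split <;> rfl

end Aux

theorem arityGap_eq_arityGap_restriction {L : Type*} [DistribLattice L] [BoundedOrder L]
    {n : ℕ} {f : (Fin n → L) → L} (hf : IsLatPoly f) (hess : 2 ≤ essArity f) :
    arityGap f = arityGap (fun x : Fin n → Bool => f (fun i => boolEmb (x i))) := by
  set g : (Fin n → Bool) → L := fun x => f (fun i => boolEmb (x i)) with hg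
  have hEss : ∀ j, EssentialAt f j ↔ EssentialAt g j := fun j => essentialAt_iff_bool hf j
  have h1 : essArity f = essArity g := by
    unfold essArity
    congr 1
    ext j
    exact hEss j
  have h2 : ∀ i j : Fin n, essArity (idMinor f i j) = essArity (idMinor g i j) := by
    intro i j
    have hiff := essentialAt_iff_bool (hf.idMinor_poly i j)
    have hre : (fun x : Fin n → Bool => idMinor f i j fun k => boolEmb (x k)) = idMinor g i j := by
      rw [restr_idMinor, ← hg]
    simp only [hre] at hiff
    unfold essArity
    congr 1
    ext k
    rw [Set.mem_setOf_eq, Set.mem_setOf_eq, hiff k]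
  unfold arityGap
  congr 1
  ext d
  simp only [Set.mem_setOf_eq]
  constructor
  · rintro ⟨i, j, hij, hi, hj, hd⟩
    exact ⟨i, j, hij, (hEss i).mp hi, (hEss j).mp hj, by rw [hd, h1, h2]⟩
  · rintro ⟨i, j, hij, hi, hj, hd⟩
    exact ⟨i, j, hij, (hEss i).mpr hi, (hEss j).mpr hj, by rw [hd, h1, h2]⟩
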